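/- arXiv:1502.02902 — 2 statements merged into one kernel-verified Lean document; each statement's English description precedes it below -/
import Mathlib

section
/- Let G be a finite group with exponent e, let r be an integer coprime to e, let m be an integer, and let g, y be elements of G. Then the number of elements x ∈ G satisfying x^m = (g*x)^m = y equals the number of elements x ∈ G satisfying x^m = (g^r * x)^m = y^r. -/
/-!
By Dirichlet's theorem there is a prime `p > |G|` with `p ≡ r (mod e)`; then `x ^ r = x ^ p` for
every `x`, so we may take `r = p`. All solutions lie in the centralizer of `y`, so we may also assume
`y` central. Then `S = {x | x ^ m = y}` is closed under conjugation, and `S ^ p = {x ^ p | x ∈ S}` is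
`{x | x ^ m = y ^ p}` because the `p`-th power map is a bijection of `G`. Writing `[T] = ∑_{t ∈ T} t`
in `𝔽_p[G]`, the first count is the coefficient of `g` in `[S] [S⁻¹]` and the second one is the
coefficient of `g ^ p` in `[S ^ p] [(S ^ p)⁻¹]`.

Both `[S]` and `[S⁻¹]` are central, and a central `x = ∑ x_g g` of `𝔽_p[G]` satisfies
`x ^ p = ∑ x_g g ^ p`: expand `x ^ p` over `p`-tuples and rotate them cyclically. The rotation
conjugates the product, so it preserves the total weight over each conjugacy class; non-constant
tuples come in orbits of size `p`; and class sizes divide `|G|`, hence are invertible mod `p`.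
Therefore `([S] [S⁻¹]) ^ p = [S ^ p] [(S ^ p)⁻¹]`, the two counts agree modulo `p`, and both are at
most `|G| < p`.
-/

open Finset MonoidAlgebra

section FixedPoints
variable {α : Type*} [Fintype α] [DecidableEq α] {p : ℕ} [Fact p.Prime]

theorem Equiv.Perm.card_filter_modEq_card_filter_fixed (σ : Equiv.Perm α) (hσ : σ ^ p = 1)
    (P : α → Prop) [DecidablePred P] (hP : ∀ a, P (σ a) ↔ P a) :
    #{a | P a} ≡ #{a | P a ∧ σ a = a} [MOD p] := by
  set τ := σ.subtypePerm hP
  have hτ : τ ^ p ^ 1 = 1 := by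
    rw [pow_one, Equiv.Perm.subtypePerm_pow]
    ext; simp [hσ]
  have hfix : τ.supportᶜ.card = #{a | P a ∧ σ a = a} := by
    rw [← Fintype.card_subtype, ← Fintype.card_coe]
    refine Fintype.card_congr ((Equiv.subtypeEquivRight fun x => ?_).trans
      (Equiv.subtypeSubtypeEquivSubtypeInter P (fun a => σ a = a)))
    simp [τ, Subtype.ext_iff]
  rw [← hfix, ← Fintype.card_subtype]
  exact (Equiv.Perm.card_compl_support_modEq hτ).symm

theorem Equiv.Perm.sum_eq_sum_filter_fixed {k : Type*} [Ring k] [CharP k p] (σ : Equiv.Perm α)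
    (hσ : σ ^ p = 1) (w : α → k) (hw : ∀ a, w (σ a) = w a) :
    ∑ a, w a = ∑ a with σ a = a, w a := by
  classical
  rw [← sum_fiberwise_of_maps_to (t := univ.image w) (g := w) (by simp),
    ← sum_fiberwise_of_maps_to (t := univ.image w) (g := w) (by simp)]
  refine sum_congr rfl fun v _ => ?_
  rw [sum_congr rfl fun a ha => (mem_filter.1 ha).2, sum_congr rfl fun a ha => (mem_filter.1 ha).2,
    sum_const, sum_const, filter_filter, nsmul_eq_mul, nsmul_eq_mul]
  congr 1
  rw [(CharP.natCast_eq_natCast k p).2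
    (σ.card_filter_modEq_card_filter_fixed hσ (fun a => w a = v) (by simp [hw]))]
  congr 2; ext; simp [and_comm]

end FixedPoints

section Tuples
variable (G : Type*) {n : ℕ}

def tupleRotate (n : ℕ) : Equiv.Perm (Fin n → G) :=
  Equiv.piCongrLeft' (fun _ => G) (finRotate n).symm

variable {G}

@[simp]
lemma tupleRotate_apply (t : Fin n → G) (i : Fin n) : tupleRotate G n t i = t (finRotate n i) :=
  rfl

lemma tupleRotate_pow_apply (k : ℕ) (t : Fin n → G) :
    (tupleRotate G n ^ k) t = t ∘ ⇑(finRotate n ^ k) := by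
  induction k generalizing t with
  | zero => rfl
  | succ k ih => rw [pow_succ, Equiv.Perm.mul_apply, ih, pow_succ']; rfl

lemma tupleRotate_pow_self (hn : 2 ≤ n) : tupleRotate G n ^ n = 1 := by
  have : finRotate n ^ n = 1 := by
    classical
    have h := (isCycle_finRotate_of_le hn).orderOf
    rw [support_finRotate_of_le hn, card_univ, Fintype.card_fin] at h
    exact orderOf_dvd_iff_pow_eq_one.1 (by rw [h])
  ext t
  rw [tupleRotate_pow_apply, this]
  rfl

lemma tupleRotate_eq_self_iff {t : Fin (n + 1) → G} :
    tupleRotate G (n + 1) t = t ↔ ∀ i, t i = t 0 := by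
  refine ⟨fun h i => ?_, fun h => funext fun i => by rw [tupleRotate_apply, h, h i]⟩
  induction i using Fin.induction with
  | zero => rfl
  | succ i ih => simpa [finRotate_apply, Fin.coeSucc_eq_succ, ih] using congrFun h i.castSucc

lemma prod_ofFn_tupleRotate [Group G] (t : Fin (n + 1) → G) :
    (List.ofFn (tupleRotate G (n + 1) t)).prod = (t 0)⁻¹ * (List.ofFn t).prod * t 0 := by
  rw [List.ofFn_succ', List.ofFn_succ, List.prod_concat, List.prod_cons]
  simp [Fin.coeSucc_eq_succ]

end Tuples

section Coprime
variable {G : Type*} [Group G] [Fintype G] {p : ℕ}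

lemma pow_bijective_of_coprime (hp : (Fintype.card G).Coprime p) :
    Function.Bijective (· ^ p : G → G) :=
  Nat.Coprime.pow_left_bijective (Nat.card_eq_fintype_card (α := G) ▸ hp)

lemma Subgroup.mem_of_pow_mem_of_coprime {H : Subgroup G} (hp : (Fintype.card G).Coprime p)
    {x : G} (hx : x ^ p ∈ H) : x ∈ H :=
  Subgroup.zpowers_le.2 hx (mem_zpowers_pow_iff.2 (hp.symm.coprime_dvd_right orderOf_dvd_card))

end Coprime

namespace MonoidAlgebra
variable {k G : Type*}

theorem pow_eq_sum_prod_ofFn [CommSemiring k] [Monoid G] [Fintype G] (x : k[G]) (n : ℕ) :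
    x ^ n = ∑ t : Fin n → G, single (List.ofFn t).prod (∏ i, x.coeff (t i)) := by
  induction n with
  | zero => simp [one_def]
  | succ n ih =>
    rw [pow_succ', ih, ← Fintype.sum_equiv (Fin.consEquiv fun _ => G) _ _ (fun _ => rfl),
      Fintype.sum_prod_type]
    conv_lhs => rw [← sum_coeff_single x, Finsupp.sum_fintype _ _ (by simp), sum_mul]
    simp [mul_sum, single_mul_single, Fin.consEquiv, Fin.prod_univ_succ]

section SumSingle
variable [Semiring k] {ι : Type*} [Fintype ι] [DecidableEq G] (f : ι → G) (h : ι → k)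

lemma coeff_sum_single (w : G) :
    (∑ i, single (f i) (h i)).coeff w = ∑ i, if f i = w then h i else 0 := by
  simp [coeff_sum, Finsupp.single_apply]

lemma sum_coeff_sum_single (C : Finset G) :
    ∑ w ∈ C, (∑ i, single (f i) (h i)).coeff w = ∑ i with f i ∈ C, h i := by
  simp_rw [coeff_sum_single]
  rw [sum_comm, sum_filter]
  simp

end SumSingle

theorem mem_center_iff [CommSemiring k] [Group G] {x : k[G]} :
    x ∈ Subsemiring.center k[G] ↔ ∀ c g, x.coeff (c * g * c⁻¹) = x.coeff g := by
  rw [Subsemiring.mem_center_iff]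
  constructor
  · intro hx c g
    have : single c⁻¹ 1 * x * single c 1 = x := by
      rw [hx, mul_assoc, single_mul_single]; simp [← one_def]
    conv_rhs => rw [← this, coeff_mul_single_apply, coeff_single_mul_apply]
    simp [mul_assoc]
  · intro hx y
    ext g
    rw [coeff_mul_apply_left, coeff_mul_apply_right]
    refine Finsupp.sum_congr fun h _ => ?_
    rw [mul_comm, ← hx h⁻¹ (g * h⁻¹)]
    group

lemma sum_coeff_eq_card_mul_coeff [Semiring k] [Group G] {u : k[G]}
    (hu : ∀ c w, u.coeff (c * w * c⁻¹) = u.coeff w) {C : Finset G} {z : G}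
    (hC : ∀ w ∈ C, IsConj z w) : ∑ w ∈ C, u.coeff w = #C * u.coeff z := by
  rw [← nsmul_eq_mul, ← sum_const]
  refine sum_congr rfl fun w hw => ?_
  obtain ⟨c, rfl⟩ := isConj_iff.1 (hC w hw)
  exact hu c z

section CharP
variable [CommRing k] {p : ℕ} [Fact p.Prime] [CharP k p] [Group G] [Fintype G] [DecidableEq G]

theorem sum_coeff_pow_char (x : k[G]) {C : Finset G} (hC : ∀ c w, c * w * c⁻¹ ∈ C ↔ w ∈ C) :
    ∑ w ∈ C, (x ^ p).coeff w = ∑ g with g ^ p ∈ C, x.coeff g ^ p := by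
  obtain ⟨n, rfl⟩ : ∃ n, p = n + 1 := Nat.exists_eq_add_one.2 (Fact.out : p.Prime).pos
  rw [pow_eq_sum_prod_ofFn, sum_coeff_sum_single, sum_filter, sum_filter,
    (tupleRotate G (n + 1)).sum_eq_sum_filter_fixed
      (tupleRotate_pow_self (Fact.out : (n + 1).Prime).two_le)]
  · have hconst : ∀ t ∈ ({t | tupleRotate G (n + 1) t = t} : Finset _), (fun _ => t 0) = t :=
      fun t ht => funext fun i => (tupleRotate_eq_self_iff.1 (mem_filter.1 ht).2 i).symm
    refine sum_nbij' (· 0) (fun g _ => g) (by simp) (by simp [tupleRotate_eq_self_iff])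
      hconst (fun _ _ => rfl) fun t ht => ?_
    rw [← hconst t ht]
    simp [List.ofFn_const, List.prod_replicate, pow_succ']
  · intro t
    have hprod : (t 0)⁻¹ * (List.ofFn t).prod * t 0 ∈ C ↔ (List.ofFn t).prod ∈ C := by
      simpa using hC (t 0)⁻¹ (List.ofFn t).prod
    simp only [prod_ofFn_tupleRotate, tupleRotate_apply, hprod,
      Equiv.prod_comp (finRotate _) (fun i => x.coeff (t i))]

theorem pow_char_of_mem_center (hp : (Fintype.card G).Coprime p) {x : k[G]}
    (hx : x ∈ Subsemiring.center k[G]) :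
    x ^ p = ∑ g, single (g ^ p) (x.coeff g ^ p) := by
  classical
  set y : k[G] := ∑ g, single (g ^ p) (x.coeff g ^ p)
  have hxp := mem_center_iff.1 (Subsemiring.pow_mem _ hx p)
  have hy : ∀ c w, y.coeff (c * w * c⁻¹) = y.coeff w := by
    intro c w
    simp only [y, coeff_sum_single]
    rw [← Fintype.sum_equiv (MulAut.conj c).toEquiv _ _ (fun _ => rfl)]
    refine Fintype.sum_congr _ _ fun h => ?_
    simp [conj_pow, mem_center_iff.1 hx]
  ext z
  set C := (MulAction.orbit (ConjAct G) z).toFinset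
  have hCz : ∀ w ∈ C, IsConj z w := fun w hw =>
    (ConjAct.mem_orbit_conjAct.1 (Set.mem_toFinset.1 hw)).symm
  have hCconj : ∀ c w, c * w * c⁻¹ ∈ C ↔ w ∈ C := by
    intro c w
    rw [Set.mem_toFinset, Set.mem_toFinset, ← ConjAct.toConjAct_smul, ← MulAction.orbit_eq_iff,
      MulAction.orbit_smul, MulAction.orbit_eq_iff]
  have hC : IsUnit (#C : k) := by
    have hdvd : #C ∣ Fintype.card G := by
      rw [Set.toFinset_card, ← ConjAct.card]
      exact Dvd.intro _ (MulAction.card_orbit_mul_card_stabilizer_eq_card_group _ z)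
    simpa using ((ZMod.isUnit_iff_coprime _ p).2 (hp.coprime_dvd_left hdvd)).map
      (ZMod.castHom (dvd_refl p) k)
  have hsum := sum_coeff_pow_char x hCconj
  rw [← sum_coeff_sum_single, sum_coeff_eq_card_mul_coeff hxp hCz,
    sum_coeff_eq_card_mul_coeff hy hCz] at hsum
  exact hC.mul_left_cancel hsum

end CharP

variable (k) in
noncomputable def ofFinset [Semiring k] (S : Finset G) : k[G] := ∑ a ∈ S, single a 1

lemma coeff_ofFinset [Semiring k] [DecidableEq G] (S : Finset G) (g : G) :
    (ofFinset k S).coeff g = if g ∈ S then 1 else 0 := by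
  simp [ofFinset, coeff_sum, Finsupp.single_apply]

section Group
open scoped Pointwise
variable [Group G] [DecidableEq G]

lemma ofFinset_mem_center [CommSemiring k] {S : Finset G}
    (hS : ∀ c, ∀ a ∈ S, c * a * c⁻¹ ∈ S) : ofFinset k S ∈ Subsemiring.center k[G] := by
  refine mem_center_iff.2 fun c g => ?_
  have : c * g * c⁻¹ ∈ S ↔ g ∈ S := ⟨fun h => by simpa [mul_assoc] using hS c⁻¹ _ h, hS c g⟩
  simp [coeff_ofFinset, this]

lemma coeff_ofFinset_mul_ofFinset_inv [Semiring k] (S : Finset G) (g : G) :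
    (ofFinset k S * ofFinset k S⁻¹).coeff g = #{x ∈ S | g * x ∈ S} := by
  simp [ofFinset, mul_sum, coeff_sum, Finsupp.single_apply, sum_boole]

lemma ofFinset_pow_char [CommRing k] {p : ℕ} [Fact p.Prime] [CharP k p] [Fintype G]
    (hp : (Fintype.card G).Coprime p) {S : Finset G} (hS : ∀ c, ∀ a ∈ S, c * a * c⁻¹ ∈ S) :
    ofFinset k S ^ p = ofFinset k (S.image (· ^ p)) := by
  rw [pow_char_of_mem_center hp (ofFinset_mem_center hS)]
  simp_rw [coeff_ofFinset]
  rw [ofFinset, sum_image (pow_bijective_of_coprime hp).1.injOn]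
  simp [ite_pow, (Fact.out : p.Prime).ne_zero, apply_ite (single _)]

end Group

end MonoidAlgebra

section Counting
open scoped Pointwise
variable {G : Type*} [Group G] [Fintype G]

theorem card_filter_mul_mem_eq_card_filter_pow_mul_mem [DecidableEq G] {S : Finset G}
    (hS : ∀ c, ∀ a ∈ S, c * a * c⁻¹ ∈ S) {p : ℕ} [hp : Fact p.Prime] (hpG : Fintype.card G < p)
    (g : G) : #{x ∈ S | g * x ∈ S} = #{x ∈ S.image (· ^ p) | g ^ p * x ∈ S.image (· ^ p)} := by
  have hcop := (Nat.coprime_of_lt_prime Fintype.card_ne_zero hpG hp.out).symm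
  have hS' : ∀ c, ∀ a ∈ S⁻¹, c * a * c⁻¹ ∈ S⁻¹ := fun c a ha => by
    simpa [mem_inv', mul_assoc] using hS c _ (mem_inv'.1 ha)
  have himage : (S.image (· ^ p))⁻¹ = S⁻¹.image (· ^ p) := by
    simp only [← image_inv_eq_inv, image_image]
    congr 1; funext x; simp [inv_pow]
  have hT := ofFinset_mem_center (k := ZMod p) hS
  have hT' := ofFinset_mem_center (k := ZMod p) hS'
  have hcomm : Commute (ofFinset (ZMod p) S) (ofFinset (ZMod p) S⁻¹) :=
    (Subsemiring.mem_center_iff.1 hT _).symm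
  have key := congrArg (coeff · (g ^ p)) (hcomm.mul_pow p)
  rw [pow_char_of_mem_center hcop (mul_mem hT hT'), ofFinset_pow_char hcop hS,
    ofFinset_pow_char hcop hS', ← himage, coeff_ofFinset_mul_ofFinset_inv, coeff_sum_single] at key
  simp only [(pow_bijective_of_coprime hcop).1.eq_iff, coeff_ofFinset_mul_ofFinset_inv,
    ZMod.pow_card, sum_ite_eq', mem_univ, if_true] at key
  rwa [ZMod.natCast_eq_natCast_iff', Nat.mod_eq_of_lt ((card_le_univ _).trans_lt hpG),
    Nat.mod_eq_of_lt ((card_le_univ _).trans_lt hpG)] at key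

lemma image_pow_filter_zpow_eq [DecidableEq G] {p : ℕ} (hp : (Fintype.card G).Coprime p)
    (m : ℤ) (y : G) :
    ({x | x ^ m = y} : Finset G).image (· ^ p) = ({x | x ^ m = y ^ p} : Finset G) := by
  have hbij := pow_bijective_of_coprime hp
  have hcomm : ∀ a : G, (a ^ p) ^ m = (a ^ m) ^ p := fun a => by
    rw [← zpow_natCast, ← zpow_natCast, ← zpow_mul, ← zpow_mul, mul_comm]
  refine Finset.ext fun x => ?_
  obtain ⟨a, rfl⟩ := hbij.2 x
  simp only [mem_image, mem_filter, mem_univ, true_and]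
  refine ⟨fun ⟨b, hb, hba⟩ => by rw [← hba, hcomm, hb], fun h => ⟨a, hbij.1 ?_, rfl⟩⟩
  simpa [← hcomm] using h

theorem card_solutions_eq_of_mem_center {y : G} (hy : y ∈ Subgroup.center G) (m : ℤ) (g : G)
    {p : ℕ} [hp : Fact p.Prime] (hpG : Fintype.card G < p) :
    Nat.card {x // x ^ m = y ∧ (g * x) ^ m = y} =
      Nat.card {x // x ^ m = y ^ p ∧ (g ^ p * x) ^ m = y ^ p} := by
  classical
  set S : Finset G := {x | x ^ m = y}
  have hS : ∀ c, ∀ a ∈ S, c * a * c⁻¹ ∈ S := by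
    intro c a ha
    simp only [S, mem_filter, mem_univ, true_and] at ha ⊢
    rw [conj_zpow, ha, Subgroup.mem_center_iff.1 hy c, mul_inv_cancel_right]
  have := card_filter_mul_mem_eq_card_filter_pow_mul_mem hS hpG g
  rw [image_pow_filter_zpow_eq (Nat.coprime_of_lt_prime Fintype.card_ne_zero hpG hp.out).symm]
    at this
  simp only [Nat.card_eq_fintype_card, Fintype.card_subtype]
  convert this using 2 <;> ext x <;> simp [S]

omit [Fintype G] in
lemma Subgroup.card_solutions_eq (H : Subgroup G) (m : ℤ) (a b : H)
    (hb : ∀ x : G, x ^ m = b → x ∈ H) :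
    Nat.card {x : H // x ^ m = b ∧ (a * x) ^ m = b} =
      Nat.card {x : G // x ^ m = b ∧ (a * x) ^ m = b} :=
  Nat.card_congr ((Equiv.subtypeEquivRight fun x => by simp [Subtype.ext_iff]).trans
    (Equiv.subtypeSubtypeEquivSubtype fun h => hb _ h.1))

theorem card_solutions_eq_of_prime (m : ℤ) (g y : G) {p : ℕ} [hp : Fact p.Prime]
    (hpG : Fintype.card G < p) :
    Nat.card {x // x ^ m = y ∧ (g * x) ^ m = y} =
      Nat.card {x // x ^ m = y ^ p ∧ (g ^ p * x) ^ m = y ^ p} := by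
  classical
  have hcop := (Nat.coprime_of_lt_prime Fintype.card_ne_zero hpG hp.out).symm
  set H := Subgroup.centralizer {y}
  have hroot : ∀ x : G, x ^ m = y → x ∈ H := fun x hx =>
    Subgroup.mem_centralizer_singleton_iff.2 (hx ▸ ((Commute.refl x).zpow_right m).eq)
  have hroot' : ∀ x : G, x ^ m = y ^ p → x ∈ H := fun x hx => by
    have : y ∈ Subgroup.centralizer {x} := Subgroup.mem_of_pow_mem_of_coprime hcop
      (Subgroup.mem_centralizer_singleton_iff.2 (hx ▸ ((Commute.refl x).zpow_left m).eq))
    exact Subgroup.mem_centralizer_singleton_iff.2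
      (Subgroup.mem_centralizer_singleton_iff.1 this).symm
  by_cases hg : g ∈ H
  · have hy : (⟨y, Subgroup.mem_centralizer_singleton_iff.2 rfl⟩ : H) ∈ Subgroup.center H :=
      Subgroup.mem_center_iff.2 fun z => Subtype.ext (Subgroup.mem_centralizer_singleton_iff.1 z.2)
    have := card_solutions_eq_of_mem_center hy m ⟨g, hg⟩ ((Fintype.card_subtype_le _).trans_lt hpG)
    rwa [H.card_solutions_eq m _ _ hroot, H.card_solutions_eq m _ _ (by simpa using hroot')] at this
  · have h1 : IsEmpty {x // x ^ m = y ∧ (g * x) ^ m = y} := ⟨fun ⟨x, hx, hgx⟩ =>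
      hg (by simpa using H.mul_mem (hroot _ hgx) (H.inv_mem (hroot x hx)))⟩
    have h2 : IsEmpty {x // x ^ m = y ^ p ∧ (g ^ p * x) ^ m = y ^ p} := ⟨fun ⟨x, hx, hgx⟩ =>
      hg (Subgroup.mem_of_pow_mem_of_coprime hcop
        (by simpa using H.mul_mem (hroot' _ hgx) (H.inv_mem (hroot' x hx))))⟩
    rw [Nat.card_of_isEmpty, Nat.card_of_isEmpty]

end Counting

lemma zpow_eq_zpow_of_intCast_eq {G : Type*} [Group G] {a b : ℤ}
    (h : (a : ZMod (Monoid.exponent G)) = b) (x : G) : x ^ a = x ^ b :=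
  zpow_eq_zpow_iff_modEq.2 (((ZMod.intCast_eq_intCast_iff _ _ _).1 h).of_dvd
    (Int.natCast_dvd_natCast.2 (Monoid.order_dvd_exponent x)))

/-- The counting formula of the paper's Corollary: for a finite group `G`,
`r` an integer coprime to the exponent `e` of `G`, `m : ℤ`, and `g y : G`,
`|{x ∈ G | x^m = (g*x)^m = y}| = |{x ∈ G | x^m = (g^r*x)^m = y^r}|`. -/
theorem counting_formula {G : Type*} [Group G] [Fintype G] (r : ℤ)
    (hr : Int.gcd r (Monoid.exponent G) = 1) (m : ℤ) (g y : G) :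
    Nat.card {x : G // x ^ m = y ∧ (g * x) ^ m = y} =
      Nat.card {x : G // x ^ m = y ^ r ∧ (g ^ r * x) ^ m = y ^ r} := by
  have : NeZero (Monoid.exponent G) := ⟨Monoid.exponent_ne_zero_of_finite⟩
  have hunit : IsUnit (r : ZMod (Monoid.exponent G)) :=
    (ZMod.coe_int_isUnit_iff_isCoprime r _).2
      (Int.isCoprime_iff_gcd_eq_one.2 (by rwa [Int.gcd_comm]))
  obtain ⟨p, hpG, hp, hpr⟩ := Nat.forall_exists_prime_gt_and_eq_mod hunit (Fintype.card G)
  have : Fact p.Prime := ⟨hp⟩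
  have hpow : ∀ x : G, x ^ r = x ^ p := fun x => by
    rw [← zpow_natCast]
    exact zpow_eq_zpow_of_intCast_eq (by simpa using hpr.symm) x
  simp only [hpow]
  exact card_solutions_eq_of_prime m g y hpG
end

section
/- Let n be a natural number, let S_n denote the symmetric group on n letters, and let r be a natural number coprime to the exponent of S_n. Then for every permutation g ∈ S_n, the power g^r is conjugate to g in S_n. -/
/-! Permutations are conjugate exactly when they have the same cycle type, and a power of a cycle
coprime to its length is again a cycle on the same support; so `g ^ r` has the cycle type of `g`
as soon as `r` is coprime to `orderOf g`, which divides the exponent. -/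

namespace Equiv.Perm

theorem cycleType_pow_of_coprime {α : Type*} [Fintype α] [DecidableEq α] {r : ℕ} {g : Perm α}
    (hr : r.Coprime (orderOf g)) : (g ^ r).cycleType = g.cycleType := by
  induction g using cycle_induction_on with
  | base_one => simp
  | base_cycles σ hσ =>
    rw [(hσ.pow_iff.2 hr).cycleType, hσ.cycleType, support_pow_coprime hr]
  | induction_disjoint σ τ hd _ hσ hτ =>
    rw [hd.orderOf] at hr
    rw [hd.commute.mul_pow, (hd.pow_disjoint_pow r r).cycleType_mul, hd.cycleType_mul,
      hσ (hr.coprime_dvd_right (Nat.dvd_lcm_left _ _)),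
      hτ (hr.coprime_dvd_right (Nat.dvd_lcm_right _ _))]

end Equiv.Perm

/-- For the symmetric group `S_n` and `r` coprime to its exponent, every
permutation `g` is conjugate to its `r`-th power `g^r`. -/
theorem symmetricGroup_isConj_pow (n : ℕ) (r : ℕ)
    (hr : Nat.Coprime r (Monoid.exponent (Equiv.Perm (Fin n))))
    (g : Equiv.Perm (Fin n)) :
    IsConj g (g ^ r) :=
  (Equiv.Perm.isConj_of_cycleType_eq <| Equiv.Perm.cycleType_pow_of_coprime <|
    hr.coprime_dvd_right (Monoid.order_dvd_exponent g)).symm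
end
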